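/- arXiv:1510.00939 — 3 statements merged into one kernel-verified Lean document; each statement's English description precedes it below -/
import Mathlib

section
/- If 𝒜 is a unital subalgebra of M_{2ⁿ}(ℂ) spanned by a subgroup of (the image in M_{2ⁿ}(ℂ) of) the n-qubit Pauli group, then dim(𝒜) · dim(𝒜′) = 4ⁿ, where 𝒜′ is the commutant of 𝒜 in M_{2ⁿ}(ℂ). -/
/-!
Label the Pauli words, up to phase, by `v ∈ (𝔽₂ × 𝔽₂)ⁿ`. Then `P v * P w` is a nonzero
multiple of `P (v + w)`, and `P v * P w = (-1)^ω(v, w) • P w * P v` for the standard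
symplectic form `ω`; the `P v` form a basis of `M_{2ⁿ}(ℂ)`, orthogonal for the trace form.
So `𝒜` is spanned by the `P v` with `v` in the subspace `G = {v | P v ∈ 𝒜}`, and since
conjugation by `P v` is diagonal in the Pauli basis, `𝒜′` is spanned by the `P w` with `w`
in the `ω`-orthogonal of `G`. Nondegeneracy of `ω` gives `|G| · |G^⊥ω| = |𝔽₂^{2n}| = 4ⁿ`.
-/

open Matrix Complex

noncomputable def pauli : Fin 4 → Matrix (Fin 2) (Fin 2) ℂ
  | 0 => 1
  | 1 => !![0, 1; 1, 0]
  | 2 => !![0, -I; I, 0]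
  | 3 => !![1, 0; 0, -1]

noncomputable def pauliWord {n : ℕ} (f : Fin n → Fin 4) :
    Matrix (Fin n → Fin 2) (Fin n → Fin 2) ℂ :=
  Matrix.of fun i j => ∏ k, pauli (f k) (i k) (j k)

noncomputable def PauliSet (n : ℕ) : Set (Matrix (Fin n → Fin 2) (Fin n → Fin 2) ℂ) :=
  {M | ∃ (c : ℂ) (f : Fin n → Fin 4),
    (c = 1 ∨ c = -1 ∨ c = I ∨ c = -I) ∧ M = c • pauliWord f}

namespace Matrix

variable {ι R : Type*} [Fintype ι] [CommSemiring R] {l m o : ι → Type*}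

def piKronecker (M : ∀ i, Matrix (l i) (m i) R) : Matrix (∀ i, l i) (∀ i, m i) R :=
  of fun x y => ∏ i, M i (x i) (y i)

@[simp]
lemma piKronecker_apply (M : ∀ i, Matrix (l i) (m i) R) (x : ∀ i, l i) (y : ∀ i, m i) :
    piKronecker M x y = ∏ i, M i (x i) (y i) :=
  rfl

lemma piKronecker_mul [DecidableEq ι] [∀ i, Fintype (m i)] (M : ∀ i, Matrix (l i) (m i) R)
    (N : ∀ i, Matrix (m i) (o i) R) :
    piKronecker M * piKronecker N = piKronecker fun i => M i * N i := by
  ext x y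
  simp only [mul_apply, piKronecker_apply, Fintype.prod_sum, Finset.prod_mul_distrib]

lemma piKronecker_smul (c : ι → R) (M : ∀ i, Matrix (l i) (m i) R) :
    piKronecker (fun i => c i • M i) = (∏ i, c i) • piKronecker M := by
  ext x y
  simp [Finset.prod_mul_distrib]

lemma trace_piKronecker [DecidableEq ι] [∀ i, Fintype (m i)] (M : ∀ i, Matrix (m i) (m i) R) :
    trace (piKronecker M) = ∏ i, trace (M i) := by
  simp only [trace, diag_apply, piKronecker_apply, Fintype.prod_sum]

lemma piKronecker_one [∀ i, DecidableEq (m i)] :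
    piKronecker (fun i => (1 : Matrix (m i) (m i) R)) = 1 := by
  ext x y
  simp [one_apply, Finset.prod_boole, funext_iff]

end Matrix

lemma LinearIndependent.finrank_span_image {ι R M : Type*} [Ring R] [Nontrivial R]
    [StrongRankCondition R] [AddCommGroup M] [Module R M] {v : ι → M}
    (hv : LinearIndependent R v) (s : Set ι) [Finite s] :
    Module.finrank R (Submodule.span R (v '' s)) = Nat.card s := by
  have := Fintype.ofFinite s
  rw [Set.image_eq_range, Nat.card_eq_fintype_card]
  exact finrank_span_eq_card (hv.comp _ Subtype.val_injective)

lemma LinearMap.BilinForm.natCard_mul_natCard_orthogonal {K V : Type*} [Field K] [Finite K]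
    [AddCommGroup V] [Module K V] [FiniteDimensional K V] {B : LinearMap.BilinForm K V}
    (hB : B.Nondegenerate) (W : Submodule K V) :
    Nat.card W * Nat.card (B.orthogonal W) = Nat.card V := by
  rw [Module.natCard_eq_pow_finrank (K := K) (V := W),
    Module.natCard_eq_pow_finrank (K := K) (V := B.orthogonal W),
    Module.natCard_eq_pow_finrank (K := K) (V := V), ← pow_add, B.finrank_orthogonal hB,
    Nat.add_sub_cancel' (Submodule.finrank_le W)]

theorem Module.Basis.commute_iff_forall_repr_ne_zero {ι K M : Type*} [Fintype ι] [Field K]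
    [Ring M] [Algebra K M] (b : Module.Basis ι K M) (u : Mˣ) {ε : ι → K}
    (hε : ∀ i, (u : M) * b i = ε i • (b i * u)) (x : M) :
    Commute (u : M) x ↔ ∀ i, b.repr x i ≠ 0 → ε i = 1 := by
  have hconj : (u : M) * x * ↑u⁻¹ = ∑ i, (b.repr x i * ε i) • b i := by
    conv_lhs => rw [← b.sum_repr x]
    simp only [Finset.mul_sum, Finset.sum_mul, mul_smul_comm, smul_mul_assoc, hε, mul_assoc,
      Units.mul_inv, mul_one, smul_smul]
  rw [Commute, SemiconjBy, ← Units.mul_inv_eq_iff_eq_mul, hconj, b.ext_elem_iff]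
  simp only [b.repr_sum_self]
  exact forall_congr' fun i => by rw [mul_right_eq_self₀, or_iff_not_imp_right]

theorem Subalgebra.mem_centralizer_iff_of_toSubmodule_eq_span {R M : Type*} [CommSemiring R]
    [Semiring M] [Algebra R M] {A : Subalgebra R M} {s : Set M}
    (hA : Subalgebra.toSubmodule A = Submodule.span R s) {x : M} :
    x ∈ Subalgebra.centralizer R (A : Set M) ↔ ∀ a ∈ s, Commute a x := by
  have hmem : ∀ a, a ∈ A ↔ a ∈ Submodule.span R s := fun a => by rw [← hA]; rfl
  rw [Subalgebra.mem_centralizer_iff]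
  refine ⟨fun h a ha => h a ((hmem a).2 (Submodule.subset_span ha)), fun h a ha => ?_⟩
  exact (Submodule.span_induction (p := fun a _ => Commute a x) h (Commute.zero_left x)
    (fun _ _ _ _ => Commute.add_left) (fun r _ _ hy => hy.smul_left r) ((hmem a).1 ha)).eq

lemma AddChar.map_sum_eq_prod {ι A M : Type*} [AddCommMonoid A] [CommMonoid M] (ψ : AddChar A M)
    (s : Finset ι) (f : ι → A) : ψ (∑ i ∈ s, f i) = ∏ i ∈ s, ψ (f i) := by
  classical
  induction s using Finset.induction_on with
  | empty => simp
  | insert i s hi ih => rw [Finset.sum_insert hi, Finset.prod_insert hi, map_add_eq_mul, ih]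

noncomputable def signChar : AddChar (ZMod 2) ℂ :=
  AddChar.zmodChar 2 (ζ := -1) (by norm_num)

lemma signChar_one : signChar 1 = -1 := by
  simp [signChar, AddChar.zmodChar_apply, show (1 : ZMod 2).val = 1 from rfl]

lemma signChar_eq_one_iff (x : ZMod 2) : signChar x = 1 ↔ x = 0 := by
  obtain rfl | rfl : x = 0 ∨ x = 1 := by revert x; decide
  · simp
  · norm_num [signChar_one, show (1 : ZMod 2) ≠ 0 by decide]

section Symplectic

variable (ι K : Type*) [Fintype ι] [CommRing K]

def symplecticForm : LinearMap.BilinForm K (ι → K × K) :=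
  ∑ i, ((LinearMap.mul K K).compl₁₂ (LinearMap.fst K K K ∘ₗ LinearMap.proj i)
      (LinearMap.snd K K K ∘ₗ LinearMap.proj i) -
    (LinearMap.mul K K).compl₁₂ (LinearMap.snd K K K ∘ₗ LinearMap.proj i)
      (LinearMap.fst K K K ∘ₗ LinearMap.proj i))

variable {ι K}

lemma symplecticForm_apply (v w : ι → K × K) :
    symplecticForm ι K v w = ∑ i, ((v i).1 * (w i).2 - (v i).2 * (w i).1) := by
  simp [symplecticForm, LinearMap.sum_apply]

lemma symplecticForm_isRefl : LinearMap.IsRefl (symplecticForm ι K) := by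
  intro v w h
  rw [symplecticForm_apply] at h ⊢
  rw [← neg_eq_zero, ← h, ← Finset.sum_neg_distrib]
  exact Finset.sum_congr rfl fun i _ => by ring

lemma symplecticForm_nondegenerate : (symplecticForm ι K).Nondegenerate := by
  classical
  refine symplecticForm_isRefl.nondegenerate_iff_separatingLeft.mpr fun v hv => funext fun i => ?_
  have h₁ := hv (Pi.single i (0, 1))
  have h₂ := hv (Pi.single i (1, 0))
  simp only [symplecticForm_apply] at h₁ h₂
  rw [Finset.sum_eq_single i (fun j _ hj => by simp [Pi.single_eq_of_ne hj]) (by simp)] at h₁ h₂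
  simp only [Pi.single_eq_same] at h₁ h₂
  ext <;> simp_all

end Symplectic

-- `(x, z)` labels the Pauli matrix proportional to `Xˣ Zᶻ`:
-- `I, X, Y, Z` are `(0, 0), (1, 0), (1, 1), (0, 1)`.
def pauliIndex : ZMod 2 × ZMod 2 ≃ Fin 4 where
  toFun p := ![![0, 3], ![1, 2]] p.1 p.2
  invFun := ![(0, 0), (1, 0), (1, 1), (0, 1)]
  left_inv := by decide
  right_inv := by decide

noncomputable def pauliPhase : Fin 4 → Fin 4 → ℂ :=
  ![![1, 1, 1, 1], ![1, 1, I, -I], ![1, -I, 1, I], ![1, I, -I, 1]]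

lemma pauliPhase_ne_zero (a b : Fin 4) : pauliPhase a b ≠ 0 := by
  fin_cases a <;> fin_cases b <;> simp [pauliPhase]

lemma pauliIndex_add_pauliIndex_symm : ∀ a b : Fin 4,
    pauliIndex (pauliIndex.symm a + pauliIndex.symm b) =
      ![![0, 1, 2, 3], ![1, 0, 3, 2], ![2, 3, 0, 1], ![3, 2, 1, 0]] a b := by
  decide

lemma pauli_mul_pauli (a b : Fin 4) : pauli a * pauli b =
    pauliPhase a b • pauli (pauliIndex (pauliIndex.symm a + pauliIndex.symm b)) := by
  rw [pauliIndex_add_pauliIndex_symm]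
  fin_cases a <;> fin_cases b <;> simp [pauli, pauliPhase, one_fin_two, smul_of]

lemma pauli_mul_self (a : Fin 4) : pauli a * pauli a = 1 := by
  fin_cases a <;> simp [pauli, one_fin_two]

lemma trace_pauli_pauliIndex (p : ZMod 2 × ZMod 2) :
    trace (pauli (pauliIndex p)) = if p = 0 then 2 else 0 := by
  obtain ⟨a, rfl⟩ := pauliIndex.symm.surjective p
  rw [Equiv.apply_symm_apply]
  fin_cases a <;> norm_num [pauli, pauliIndex, trace_fin_two]

lemma pauli_mul_pauli_comm (p q : ZMod 2 × ZMod 2) :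
    pauli (pauliIndex p) * pauli (pauliIndex q) =
      signChar (p.1 * q.2 - p.2 * q.1) • (pauli (pauliIndex q) * pauli (pauliIndex p)) := by
  obtain ⟨a, rfl⟩ := pauliIndex.symm.surjective p
  obtain ⟨b, rfl⟩ := pauliIndex.symm.surjective q
  simp only [Equiv.apply_symm_apply]
  fin_cases a <;> fin_cases b <;> ext i j <;> fin_cases i <;> fin_cases j <;>
    simp [pauli, pauliIndex, signChar_one]

section PauliOperators

variable {n : ℕ}

noncomputable def pauliOp (v : Fin n → ZMod 2 × ZMod 2) :
    Matrix (Fin n → Fin 2) (Fin n → Fin 2) ℂ :=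
  pauliWord fun k => pauliIndex (v k)

lemma pauliOp_eq_piKronecker (v : Fin n → ZMod 2 × ZMod 2) :
    pauliOp v = piKronecker fun k => pauli (pauliIndex (v k)) :=
  rfl

lemma pauliOp_zero : pauliOp (0 : Fin n → ZMod 2 × ZMod 2) = 1 :=
  piKronecker_one

lemma pauliOp_mul_self (v : Fin n → ZMod 2 × ZMod 2) : pauliOp v * pauliOp v = 1 := by
  simp only [pauliOp_eq_piKronecker, piKronecker_mul, pauli_mul_self, piKronecker_one]

lemma pauliOp_mul (v w : Fin n → ZMod 2 × ZMod 2) :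
    ∃ c : ℂ, c ≠ 0 ∧ pauliOp v * pauliOp w = c • pauliOp (v + w) := by
  refine ⟨∏ k, pauliPhase (pauliIndex (v k)) (pauliIndex (w k)),
    Finset.prod_ne_zero_iff.2 fun k _ => pauliPhase_ne_zero _ _, ?_⟩
  simp only [pauliOp_eq_piKronecker, piKronecker_mul, pauli_mul_pauli, Equiv.symm_apply_apply,
    piKronecker_smul, Pi.add_apply]

lemma pauliOp_mul_comm (v w : Fin n → ZMod 2 × ZMod 2) :
    pauliOp v * pauliOp w = signChar (symplecticForm _ _ v w) • (pauliOp w * pauliOp v) := by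
  simp only [pauliOp_eq_piKronecker, piKronecker_mul]
  rw [funext fun k => pauli_mul_pauli_comm (v k) (w k), piKronecker_smul, symplecticForm_apply,
    AddChar.map_sum_eq_prod]

lemma trace_pauliOp (v : Fin n → ZMod 2 × ZMod 2) :
    trace (pauliOp v) = if v = 0 then 2 ^ n else 0 := by
  rw [pauliOp_eq_piKronecker, trace_piKronecker]
  simp [trace_pauli_pauliIndex, Finset.prod_ite_zero, funext_iff]

lemma trace_pauliOp_mul_of_ne {v w : Fin n → ZMod 2 × ZMod 2} (h : v ≠ w) :
    trace (pauliOp v * pauliOp w) = 0 := by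
  obtain ⟨c, -, hc⟩ := pauliOp_mul v w
  rw [hc, trace_smul, trace_pauliOp, if_neg, smul_zero]
  rwa [add_eq_zero_iff_eq_neg, ZModModule.neg_eq_self]

lemma linearIndependent_pauliOp (n : ℕ) : LinearIndependent ℂ (pauliOp (n := n)) := by
  let traceForm : LinearMap.BilinForm ℂ (Matrix (Fin n → Fin 2) (Fin n → Fin 2) ℂ) :=
    (LinearMap.mul ℂ _).compr₂ (traceLinearMap _ ℂ ℂ)
  refine traceForm.linearIndependent_of_iIsOrtho (fun v w h => trace_pauliOp_mul_of_ne h)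
    fun v => ?_
  simp [traceForm, pauliOp_mul_self]

noncomputable def pauliBasis (n : ℕ) :
    Module.Basis (Fin n → ZMod 2 × ZMod 2) ℂ (Matrix (Fin n → Fin 2) (Fin n → Fin 2) ℂ) :=
  basisOfLinearIndependentOfCardEqFinrank (linearIndependent_pauliOp n) (by
    simp [Module.finrank_matrix, ← mul_pow])

lemma coe_pauliBasis (n : ℕ) : ⇑(pauliBasis n) = pauliOp :=
  coe_basisOfLinearIndependentOfCardEqFinrank _ _

end PauliOperators

section Commutant

variable {n : ℕ}

def pauliLabels (A : Subalgebra ℂ (Matrix (Fin n → Fin 2) (Fin n → Fin 2) ℂ)) :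
    Submodule (ZMod 2) (Fin n → ZMod 2 × ZMod 2) where
  carrier := {v | pauliOp v ∈ A}
  zero_mem' := by simp [pauliOp_zero]
  add_mem' {v w} hv hw := by
    obtain ⟨c, hc, h⟩ := pauliOp_mul v w
    have hvw : c • pauliOp (v + w) ∈ A := h ▸ A.mul_mem hv hw
    exact (Submodule.smul_mem_iff (Subalgebra.toSubmodule A) hc).1 hvw
  smul_mem' c v hv := by
    obtain rfl | rfl : c = 0 ∨ c = 1 := by revert c; decide
    · simp [pauliOp_zero]
    · rwa [one_smul]

theorem toSubmodule_eq_span_pauliLabels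
    {A : Subalgebra ℂ (Matrix (Fin n → Fin 2) (Fin n → Fin 2) ℂ)}
    {H : Set (Matrix (Fin n → Fin 2) (Fin n → Fin 2) ℂ)} (hH : H ⊆ PauliSet n)
    (hspan : Subalgebra.toSubmodule A = Submodule.span ℂ H) :
    Subalgebra.toSubmodule A = Submodule.span ℂ (pauliOp '' pauliLabels A) := by
  refine le_antisymm ?_ (Submodule.span_le.2 fun _ ⟨v, hv, hM⟩ => hM ▸ hv)
  rw [hspan, Submodule.span_le]
  intro M hM
  obtain ⟨c, f, hc, rfl⟩ := hH hM
  have hc0 : c ≠ 0 := by rcases hc with rfl | rfl | rfl | rfl <;> simp [I_ne_zero]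
  have hf : pauliWord f = pauliOp fun k => pauliIndex.symm (f k) := by simp [pauliOp]
  have hcf : c • pauliWord f ∈ A := by
    rw [← Subalgebra.mem_toSubmodule, hspan]
    exact Submodule.subset_span hM
  have hfA : pauliWord f ∈ A := by simpa [hc0] using A.smul_mem hcf c⁻¹
  rw [hf] at hfA ⊢
  exact Submodule.smul_mem _ _ (Submodule.subset_span ⟨_, hfA, rfl⟩)

lemma commute_pauliOp_iff (v : Fin n → ZMod 2 × ZMod 2)
    (x : Matrix (Fin n → Fin 2) (Fin n → Fin 2) ℂ) :
    Commute (pauliOp v) x ↔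
      ∀ w, (pauliBasis n).repr x w ≠ 0 → symplecticForm (Fin n) (ZMod 2) v w = 0 := by
  have := (pauliBasis n).commute_iff_forall_repr_ne_zero
    ⟨pauliOp v, pauliOp v, pauliOp_mul_self v, pauliOp_mul_self v⟩
    (fun w => by simpa [coe_pauliBasis] using pauliOp_mul_comm v w) x
  simpa [signChar_eq_one_iff] using this

theorem toSubmodule_centralizer_eq_span_orthogonal
    {A : Subalgebra ℂ (Matrix (Fin n → Fin 2) (Fin n → Fin 2) ℂ)}
    {G : Submodule (ZMod 2) (Fin n → ZMod 2 × ZMod 2)}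
    (hA : Subalgebra.toSubmodule A = Submodule.span ℂ (pauliOp '' G)) :
    Subalgebra.toSubmodule
        (Subalgebra.centralizer ℂ (A : Set (Matrix (Fin n → Fin 2) (Fin n → Fin 2) ℂ))) =
      Submodule.span ℂ (pauliOp '' (symplecticForm (Fin n) (ZMod 2)).orthogonal G) := by
  ext x
  rw [Subalgebra.mem_toSubmodule, Subalgebra.mem_centralizer_iff_of_toSubmodule_eq_span hA,
    Set.forall_mem_image]
  simp only [commute_pauliOp_iff]
  rw [← coe_pauliBasis, Module.Basis.mem_span_image]
  simp only [Set.subset_def, Finsupp.mem_support_iff, SetLike.mem_coe,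
    LinearMap.BilinForm.mem_orthogonal_iff]
  exact ⟨fun h w hw v hv => h hv w hw, fun h _ hv w hw => h w hw _ hv⟩

end Commutant

/-- If `𝒜` is a unital subalgebra of `M_{2ⁿ}(ℂ)` spanned (as a linear subspace) by a
multiplicatively closed subgroup of the n-qubit Pauli group, then
`dim 𝒜 · dim 𝒜′ = 4ⁿ`, where `𝒜′` is the commutant of `𝒜`. -/
theorem stmt9 (n : ℕ) (A : Subalgebra ℂ (Matrix (Fin n → Fin 2) (Fin n → Fin 2) ℂ))
    (H : Submonoid (Matrix (Fin n → Fin 2) (Fin n → Fin 2) ℂ))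
    (hH : (H : Set (Matrix (Fin n → Fin 2) (Fin n → Fin 2) ℂ)) ⊆ PauliSet n)
    (hspan : Subalgebra.toSubmodule A =
      Submodule.span ℂ (H : Set (Matrix (Fin n → Fin 2) (Fin n → Fin 2) ℂ))) :
    Module.finrank ℂ A *
      Module.finrank ℂ (Subalgebra.centralizer ℂ
        (A : Set (Matrix (Fin n → Fin 2) (Fin n → Fin 2) ℂ))) = 4 ^ n := by
  have hA := toSubmodule_eq_span_pauliLabels hH hspan
  have hP := linearIndependent_pauliOp n
  rw [← Subalgebra.finrank_toSubmodule, hA, ← Subalgebra.finrank_toSubmodule,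
    toSubmodule_centralizer_eq_span_orthogonal hA, hP.finrank_span_image, hP.finrank_span_image,
    SetLike.coe_sort_coe, SetLike.coe_sort_coe,
    LinearMap.BilinForm.natCard_mul_natCard_orthogonal symplecticForm_nondegenerate]
  simp
end

section
/- Two unital *-subalgebras 𝒜, ℬ of M_N(ℂ) are quasiorthogonal if and only if Φ_𝒜 ∘ Φ_ℬ = Φ_ℬ ∘ Φ_𝒜 and both composites equal the completely depolarizing map ρ ↦ (tr(ρ)/N)·I. -/
open Matrix

lemma trace_ct_mul_self_eq_zero {N : ℕ} (d : Matrix (Fin N) (Fin N) ℂ)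
    (h : Matrix.trace (dᴴ * d) = 0) : d = 0 := by
  have h1 : Matrix.trace (dᴴ * d) = ((∑ i, ∑ j, Complex.normSq (d j i) : ℝ) : ℂ) := by
    simp only [Matrix.trace, Matrix.diag, Matrix.mul_apply, Matrix.conjTranspose_apply]
    push_cast
    refine Finset.sum_congr rfl fun i _ => Finset.sum_congr rfl fun j _ => ?_
    rw [Complex.star_def, ← Complex.normSq_eq_conj_mul_self]
  rw [h1, Complex.ofReal_eq_zero] at h
  have h2 := (Finset.sum_eq_zero_iff_of_nonneg (fun i _ => Finset.sum_nonneg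
    (fun j _ => Complex.normSq_nonneg _))).mp h
  ext j i
  have h3 := (Finset.sum_eq_zero_iff_of_nonneg
    (fun j _ => Complex.normSq_nonneg _)).mp (h2 i (Finset.mem_univ i)) j (Finset.mem_univ j)
  simpa using Complex.normSq_eq_zero.mp h3

lemma proj_uniq {N : ℕ} (A : StarSubalgebra ℂ (Matrix (Fin N) (Fin N) ℂ))
    (ΦA : Matrix (Fin N) (Fin N) ℂ →ₗ[ℂ] Matrix (Fin N) (Fin N) ℂ)
    (hrangeA : ∀ x, ΦA x ∈ A)
    (hprojA : ∀ x, ∀ a ∈ A, Matrix.trace (aᴴ * (x - ΦA x)) = 0)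
    (x y : Matrix (Fin N) (Fin N) ℂ) (hy : y ∈ A)
    (hortho : ∀ a ∈ A, Matrix.trace (aᴴ * (x - y)) = 0) : ΦA x = y := by
  have hd : ΦA x - y ∈ A := sub_mem (hrangeA x) hy
  have h0 : Matrix.trace ((ΦA x - y)ᴴ * (ΦA x - y)) = 0 := by
    have e : (ΦA x - y)ᴴ * (ΦA x - y) = (ΦA x - y)ᴴ * (x - y) - (ΦA x - y)ᴴ * (x - ΦA x) := by
      rw [← mul_sub]; congr 1; abel
    rw [e, Matrix.trace_sub, hortho _ hd, hprojA x _ hd, sub_zero]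
  exact sub_eq_zero.mp (trace_ct_mul_self_eq_zero _ h0)

/-- Two unital *-subalgebras `𝒜, ℬ` of `M_N(ℂ)` are quasiorthogonal iff their
trace-preserving conditional expectations (Hilbert–Schmidt orthogonal projections)
commute and both composites equal the completely depolarizing map `ρ ↦ (tr ρ / N)·I`. -/
theorem stmt12 (N : ℕ) (hN : 0 < N)
    (A B : StarSubalgebra ℂ (Matrix (Fin N) (Fin N) ℂ))
    (ΦA ΦB : Matrix (Fin N) (Fin N) ℂ →ₗ[ℂ] Matrix (Fin N) (Fin N) ℂ)
    (hfixA : ∀ a ∈ A, ΦA a = a)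
    (hrangeA : ∀ x, ΦA x ∈ A)
    (hprojA : ∀ x, ∀ a ∈ A, Matrix.trace (aᴴ * (x - ΦA x)) = 0)
    (hfixB : ∀ b ∈ B, ΦB b = b)
    (hrangeB : ∀ x, ΦB x ∈ B)
    (hprojB : ∀ x, ∀ b ∈ B, Matrix.trace (bᴴ * (x - ΦB x)) = 0) :
    (∀ a ∈ A, ∀ b ∈ B,
        Matrix.trace (a * b) = Matrix.trace a * Matrix.trace b / N) ↔
    (ΦA ∘ₗ ΦB = ΦB ∘ₗ ΦA ∧
      ∀ ρ, ΦA (ΦB ρ) = (Matrix.trace ρ / N) • (1 : Matrix (Fin N) (Fin N) ℂ)) := by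
  have trA : ∀ x, Matrix.trace (ΦA x) = Matrix.trace x := by
    intro x
    have h := hprojA x 1 A.one_mem
    rw [conjTranspose_one, one_mul, Matrix.trace_sub, sub_eq_zero] at h
    exact h.symm
  have trB : ∀ x, Matrix.trace (ΦB x) = Matrix.trace x := by
    intro x
    have h := hprojB x 1 B.one_mem
    rw [conjTranspose_one, one_mul, Matrix.trace_sub, sub_eq_zero] at h
    exact h.symm
  constructor
  · intro hq
    have keyA : ∀ b ∈ B, ΦA b = (Matrix.trace b / N) • 1 := by
      intro b hb
      refine proj_uniq A ΦA hrangeA hprojA _ _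
        (SMulMemClass.smul_mem _ A.one_mem) (fun a ha => ?_)
      have h1 := hq aᴴ (star_mem ha) b hb
      rw [mul_sub, Matrix.trace_sub, sub_eq_zero, Matrix.mul_smul, mul_one,
        Matrix.trace_smul, smul_eq_mul, h1]
      ring
    have keyB : ∀ a ∈ A, ΦB a = (Matrix.trace a / N) • 1 := by
      intro a ha
      refine proj_uniq B ΦB hrangeB hprojB _ _
        (SMulMemClass.smul_mem _ B.one_mem) (fun b hb => ?_)
      have h1 := hq a ha bᴴ (star_mem hb)
      rw [Matrix.trace_mul_comm] at h1
      rw [mul_sub, Matrix.trace_sub, sub_eq_zero, Matrix.mul_smul, mul_one,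
        Matrix.trace_smul, smul_eq_mul, h1]
      ring
    have main : ∀ ρ, ΦA (ΦB ρ) = (Matrix.trace ρ / N) • 1 := fun ρ => by
      rw [keyA _ (hrangeB ρ), trB ρ]
    have mainB : ∀ ρ, ΦB (ΦA ρ) = (Matrix.trace ρ / N) • 1 := fun ρ => by
      rw [keyB _ (hrangeA ρ), trA ρ]
    exact ⟨LinearMap.ext fun ρ => by simp [main ρ, mainB ρ], main⟩
  · rintro ⟨-, hdep⟩
    intro a ha b hb
    have h1 : ΦA b = (Matrix.trace b / N) • 1 := by
      have h := hdep b
      rwa [hfixB b hb] at h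
    have h2 := hprojA b aᴴ (star_mem ha)
    rw [conjTranspose_conjTranspose, mul_sub, Matrix.trace_sub, sub_eq_zero, h1,
      Matrix.mul_smul, mul_one, Matrix.trace_smul, smul_eq_mul] at h2
    rw [h2]
    ring
end

section
/- Let Φ be the trace-preserving conditional expectation onto the diagonal algebra Δ_{2ⁿ} ⊂ M_{2ⁿ}(ℂ), equivalently the channel with Kraus operators 2^{-n/2}·g for g ranging over the 2ⁿ diagonal Pauli words (tensor products of I and Z). Then Φ privatizes ⌊n/2⌋ qubits: there is a unital *-subalgebra ℬ ⊆ M_{2ⁿ}(ℂ) isomorphic to M_{2^{⌊n/2⌋}}(ℂ) such that Φ(b) = (tr(b)/2ⁿ)·I for all b ∈ ℬ. -/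
open Matrix

/-- The trace-preserving conditional expectation onto the diagonal algebra `Δ_{2ⁿ}`:
the map replacing a matrix by its diagonal part (equivalently, the channel whose Kraus
operators are the `2ⁿ` diagonal Pauli words weighted by `2^{-n/2}`). -/
noncomputable def diagCondExp {n : ℕ} (ρ : Matrix (Fin n → Fin 2) (Fin n → Fin 2) ℂ) :
    Matrix (Fin n → Fin 2) (Fin n → Fin 2) ℂ :=
  Matrix.diagonal ρ.diag

namespace Stmt19

open Kronecker

/-- The single-pair gadget: entries of a `4 × 4` unitary conjugating `Z ⊗ I ↦ X ⊗ Z`,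
`X ⊗ I ↦ X ⊗ X`, so that the image of every one-qubit Pauli has zero diagonal. -/
noncomputable def u2 (a b x y : Fin 2) : ℂ :=
  2⁻¹ * (-1) ^ (a.val * x.val + a.val * b.val + b.val * y.val + x.val * y.val + x.val) *
    Complex.I ^ (b.val + x.val)

set_option maxHeartbeats 2000000 in
lemma L1 (a b a' b' : Fin 2) :
    (∑ x : Fin 2, ∑ y : Fin 2, u2 a b x y * (starRingEnd ℂ) (u2 a' b' x y)) =
      if a = a' ∧ b = b' then 1 else 0 := by
  fin_cases a <;> fin_cases b <;> fin_cases a' <;> fin_cases b' <;>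
    norm_num [u2, Fin.sum_univ_two, Complex.ext_iff]

set_option maxHeartbeats 2000000 in
lemma L2 (a b x x' : Fin 2) :
    (∑ y : Fin 2, u2 a b x y * (starRingEnd ℂ) (u2 a b x' y)) =
      if x = x' then 2⁻¹ else 0 := by
  fin_cases a <;> fin_cases b <;> fin_cases x <;> fin_cases x' <;>
    norm_num [u2, Fin.sum_univ_two, Complex.ext_iff]

abbrev J (n : ℕ) : Type := Fin (n / 2) → Fin 2
abbrev L (n : ℕ) : Type := Fin (n - 2 * (n / 2)) → Fin 2

/-- The tensor product over the `⌊n/2⌋` pairs of the single-pair gadget unitary. -/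
noncomputable def W0 (n : ℕ) : Matrix (J n × J n) (J n × J n) ℂ :=
  fun p q => ∏ k, u2 (p.1 k) (p.2 k) (q.1 k) (q.2 k)

lemma W0_mul_conjTranspose (n : ℕ) : W0 n * (W0 n)ᴴ = 1 := by
  ext p q
  simp only [Matrix.mul_apply, Matrix.conjTranspose_apply, W0, Matrix.star_apply,
    Complex.star_def, map_prod]
  rw [Fintype.sum_prod_type]
  have h1 : ∀ x : J n, (∑ y : J n,
      (∏ k, u2 (p.1 k) (p.2 k) (x k) (y k)) * ∏ k, (starRingEnd ℂ) (u2 (q.1 k) (q.2 k) (x k) (y k)))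
      = ∏ k, ∑ t : Fin 2, u2 (p.1 k) (p.2 k) (x k) t * (starRingEnd ℂ) (u2 (q.1 k) (q.2 k) (x k) t) := by
    intro x
    rw [Fintype.prod_sum]
    exact Finset.sum_congr rfl fun y _ => (Finset.prod_mul_distrib).symm
  rw [Finset.sum_congr rfl fun x _ => h1 x,
    (Fintype.prod_sum (fun (k : Fin (n/2)) (s : Fin 2) => ∑ t : Fin 2,
      u2 (p.1 k) (p.2 k) s t * (starRingEnd ℂ) (u2 (q.1 k) (q.2 k) s t))).symm]
  have h2 : ∀ k, (∑ s : Fin 2, ∑ t : Fin 2,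
      u2 (p.1 k) (p.2 k) s t * (starRingEnd ℂ) (u2 (q.1 k) (q.2 k) s t))
      = if p.1 k = q.1 k ∧ p.2 k = q.2 k then 1 else 0 := fun k => L1 _ _ _ _
  rw [Finset.prod_congr rfl fun k _ => h2 k, Fintype.prod_boole, Matrix.one_apply]
  congr 1
  simp [Prod.ext_iff, funext_iff, forall_and]

lemma W0_row (n : ℕ) (u : J n × J n) (x x' : J n) :
    (∑ y : J n, W0 n u (x, y) * (starRingEnd ℂ) (W0 n u (x', y))) =
      if x = x' then ((2 : ℂ) ^ (n / 2))⁻¹ else 0 := by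
  simp only [W0, map_prod]
  have h1 : (∑ y : J n,
      (∏ k, u2 (u.1 k) (u.2 k) (x k) (y k)) * ∏ k, (starRingEnd ℂ) (u2 (u.1 k) (u.2 k) (x' k) (y k)))
      = ∏ k, ∑ t : Fin 2, u2 (u.1 k) (u.2 k) (x k) t * (starRingEnd ℂ) (u2 (u.1 k) (u.2 k) (x' k) t) := by
    rw [Fintype.prod_sum]
    exact Finset.sum_congr rfl fun y _ => (Finset.prod_mul_distrib).symm
  rw [h1, Finset.prod_congr rfl fun k _ => L2 (u.1 k) (u.2 k) (x k) (x' k)]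
  have h3 : ∀ k : Fin (n/2), (if x k = x' k then (2:ℂ)⁻¹ else 0)
      = 2⁻¹ * (if x k = x' k then 1 else 0) := by intro k; split_ifs <;> ring
  rw [Finset.prod_congr rfl fun k _ => h3 k, Finset.prod_mul_distrib, Finset.prod_const,
    Fintype.prod_boole]
  simp [funext_iff, ← inv_pow]

/-- The key diagonal computation: conjugating `c ⊗ 1` by the gadget unitary produces a
matrix with constant diagonal `tr c / 2^{n/2}`. -/
lemma diag_conj (n : ℕ) (c : Matrix (J n) (J n) ℂ) (u : J n × J n) :
    (W0 n * (c ⊗ₖ (1 : Matrix (J n) (J n) ℂ)) * (W0 n)ᴴ) u u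
      = Matrix.trace c * ((2 : ℂ) ^ (n / 2))⁻¹ := by
  have step1 : (W0 n * (c ⊗ₖ (1 : Matrix (J n) (J n) ℂ)) * (W0 n)ᴴ) u u
      = ∑ r : J n × J n, ∑ s : J n × J n,
          W0 n u r * ((c ⊗ₖ (1 : Matrix (J n) (J n) ℂ)) r s * (starRingEnd ℂ) (W0 n u s)) := by
    simp only [Matrix.mul_apply, Matrix.conjTranspose_apply, Complex.star_def,
      Finset.sum_mul, mul_assoc]
    rw [Finset.sum_comm]
  rw [step1]
  have step2 : ∀ r : J n × J n, (∑ s : J n × J n,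
      W0 n u r * ((c ⊗ₖ (1 : Matrix (J n) (J n) ℂ)) r s * (starRingEnd ℂ) (W0 n u s)))
      = ∑ s1 : J n, W0 n u r * (c r.1 s1 * (starRingEnd ℂ) (W0 n u (s1, r.2))) := by
    intro r
    rw [Fintype.sum_prod_type]
    refine Finset.sum_congr rfl fun s1 _ => ?_
    simp only [Matrix.kroneckerMap_apply, Matrix.one_apply, mul_ite, mul_one, mul_zero,
      ite_mul, zero_mul]
    rw [Finset.sum_ite_eq (Finset.univ) r.2
      (fun s2 => W0 n u r * (c r.1 s1 * (starRingEnd ℂ) (W0 n u (s1, s2))))]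
    simp
  rw [Finset.sum_congr rfl fun r _ => step2 r, Fintype.sum_prod_type]
  have step3 : ∀ r1 : J n, (∑ r2 : J n, ∑ s1 : J n,
      W0 n u (r1, r2) * (c r1 s1 * (starRingEnd ℂ) (W0 n u (s1, r2))))
      = ∑ s1 : J n, c r1 s1 * (if r1 = s1 then ((2 : ℂ) ^ (n / 2))⁻¹ else 0) := by
    intro r1
    rw [Finset.sum_comm]
    refine Finset.sum_congr rfl fun s1 _ => ?_
    rw [← W0_row n u r1 s1, Finset.mul_sum]
    exact Finset.sum_congr rfl fun r2 _ => by ring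
  rw [Finset.sum_congr rfl fun r1 _ => step3 r1]
  have step4 : ∀ r1 : J n, (∑ s1 : J n, c r1 s1 * (if r1 = s1 then ((2 : ℂ) ^ (n / 2))⁻¹ else 0))
      = c r1 r1 * ((2 : ℂ) ^ (n / 2))⁻¹ := by
    intro r1
    simp only [mul_ite, mul_zero]
    rw [Finset.sum_ite_eq Finset.univ r1 (fun s1 => c r1 s1 * ((2 : ℂ) ^ (n / 2))⁻¹)]
    simp
  rw [Finset.sum_congr rfl fun r1 _ => step4 r1, ← Finset.sum_mul]
  rfl

lemma conjTranspose_mul_W0 (n : ℕ) : (W0 n)ᴴ * W0 n = 1 :=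
  mul_eq_one_comm.mp (W0_mul_conjTranspose n)

/-- An identification of the `2ⁿ`-dimensional index set with pairs-plus-leftover
(any bijection works). -/
noncomputable def σe (n : ℕ) : (Fin n → Fin 2) ≃ (J n × J n) × L n :=
  Fintype.equivOfCardEq (by
    simp only [Fintype.card_prod, Fintype.card_fun, Fintype.card_fin]
    rw [← pow_add, ← pow_add]
    congr 1
    omega)

lemma kron_conjTranspose {l m p q : Type*} [Fintype l] [Fintype m] [Fintype p] [Fintype q]
    (A : Matrix l m ℂ) (B : Matrix p q ℂ) : (A ⊗ₖ B)ᴴ = Aᴴ ⊗ₖ Bᴴ := by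
  ext i j
  simp [Matrix.conjTranspose_apply, Matrix.kroneckerMap_apply, star_mul']

lemma conj_conj (n : ℕ) (A B : Matrix (J n × J n) (J n × J n) ℂ) :
    (W0 n * A * (W0 n)ᴴ) * (W0 n * B * (W0 n)ᴴ) = W0 n * (A * B) * (W0 n)ᴴ := by
  simp only [← Matrix.mul_assoc]
  rw [Matrix.mul_assoc (W0 n * A) (W0 n)ᴴ (W0 n), conjTranspose_mul_W0, Matrix.mul_one]

/-- The underlying function of the embedding `M_{2^{⌊n/2⌋}}(ℂ) → M_{2ⁿ}(ℂ)`. -/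
noncomputable def psiFun (n : ℕ) (c : Matrix (J n) (J n) ℂ) :
    Matrix (Fin n → Fin 2) (Fin n → Fin 2) ℂ :=
  ((W0 n * (c ⊗ₖ (1 : Matrix (J n) (J n) ℂ)) * (W0 n)ᴴ)
      ⊗ₖ (1 : Matrix (L n) (L n) ℂ)).submatrix (σe n) (σe n)

lemma psiFun_one (n : ℕ) : psiFun n 1 = 1 := by
  unfold psiFun
  rw [Matrix.one_kronecker_one, Matrix.mul_one, W0_mul_conjTranspose,
    Matrix.one_kronecker_one, Matrix.submatrix_one_equiv]

lemma psiFun_mul (n : ℕ) (c d : Matrix (J n) (J n) ℂ) :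
    psiFun n (c * d) = psiFun n c * psiFun n d := by
  unfold psiFun
  rw [Matrix.submatrix_mul_equiv _ _ _ (σe n) _]
  rw [← Matrix.mul_kronecker_mul, Matrix.one_mul, conj_conj, ← Matrix.mul_kronecker_mul,
    Matrix.one_mul]

lemma psiFun_add (n : ℕ) (c d : Matrix (J n) (J n) ℂ) :
    psiFun n (c + d) = psiFun n c + psiFun n d := by
  unfold psiFun
  rw [Matrix.add_kronecker, Matrix.mul_add, Matrix.add_mul, Matrix.add_kronecker,
    Matrix.submatrix_add]
  rfl

lemma psiFun_smul (n : ℕ) (r : ℂ) (c : Matrix (J n) (J n) ℂ) :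
    psiFun n (r • c) = r • psiFun n c := by
  unfold psiFun
  rw [Matrix.smul_kronecker, Matrix.mul_smul, Matrix.smul_mul, Matrix.smul_kronecker,
    Matrix.submatrix_smul]
  rfl

lemma psiFun_star (n : ℕ) (c : Matrix (J n) (J n) ℂ) :
    psiFun n cᴴ = (psiFun n c)ᴴ := by
  unfold psiFun
  rw [Matrix.conjTranspose_submatrix]
  rw [kron_conjTranspose, Matrix.conjTranspose_one, Matrix.conjTranspose_mul,
    Matrix.conjTranspose_mul, Matrix.conjTranspose_conjTranspose, kron_conjTranspose,
    Matrix.conjTranspose_one, ← Matrix.mul_assoc]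

/-- The star algebra embedding `M_{2^{⌊n/2⌋}}(ℂ) → M_{2ⁿ}(ℂ)` whose range is privatized by
the conditional expectation onto the diagonal. -/
noncomputable def Psi (n : ℕ) :
    Matrix (J n) (J n) ℂ →⋆ₐ[ℂ] Matrix (Fin n → Fin 2) (Fin n → Fin 2) ℂ where
  toFun := psiFun n
  map_one' := psiFun_one n
  map_mul' := psiFun_mul n
  map_zero' := by
    have := psiFun_smul n 0 0
    simpa using this
  map_add' := psiFun_add n
  commutes' r := by
    simp only [Algebra.algebraMap_eq_smul_one]
    rw [psiFun_smul, psiFun_one]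
  map_star' c := by
    simp only [Matrix.star_eq_conjTranspose]
    exact psiFun_star n c

lemma unconj (n : ℕ) (A : Matrix (J n × J n) (J n × J n) ℂ) :
    (W0 n)ᴴ * (W0 n * A * (W0 n)ᴴ) * W0 n = A := by
  simp only [← Matrix.mul_assoc]
  rw [conjTranspose_mul_W0, Matrix.one_mul, Matrix.mul_assoc, conjTranspose_mul_W0,
    Matrix.mul_one]

lemma psiFun_injective (n : ℕ) : Function.Injective (psiFun n) := by
  intro c d h
  unfold psiFun at h
  have h1 := congrArg (fun M => M.submatrix (⇑(σe n).symm) (⇑(σe n).symm)) h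
  simp only [Matrix.submatrix_submatrix, Equiv.self_comp_symm, Matrix.submatrix_id_id] at h1
  have h2 : W0 n * (c ⊗ₖ (1 : Matrix (J n) (J n) ℂ)) * (W0 n)ᴴ
      = W0 n * (d ⊗ₖ (1 : Matrix (J n) (J n) ℂ)) * (W0 n)ᴴ := by
    ext u v
    have h3 := congrArg (fun M => M (u, (fun _ => 0 : L n)) (v, (fun _ => 0 : L n))) h1
    simpa [Matrix.kroneckerMap_apply, Matrix.one_apply] using h3
  have h4 := congrArg (fun M => (W0 n)ᴴ * M * W0 n) h2
  simp only [unconj] at h4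
  ext x y
  have h5 := congrArg (fun M => M (x, (fun _ => 0 : J n)) (y, (fun _ => 0 : J n))) h4
  simpa [Matrix.kroneckerMap_apply, Matrix.one_apply] using h5

lemma psiFun_diag (n : ℕ) (c : Matrix (J n) (J n) ℂ) (f : Fin n → Fin 2) :
    (psiFun n c).diag f = Matrix.trace c * ((2 : ℂ) ^ (n / 2))⁻¹ := by
  unfold psiFun
  simp only [Matrix.diag_apply, Matrix.submatrix_apply, Matrix.kroneckerMap_apply,
    Matrix.one_apply_eq, mul_one]
  exact diag_conj n c _

/-- Reindexing as a star algebra equivalence. -/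
noncomputable def mreindex {p q : Type*} [Fintype p] [Fintype q] [DecidableEq p] [DecidableEq q]
    (e : p ≃ q) : Matrix p p ℂ ≃⋆ₐ[ℂ] Matrix q q ℂ where
  toFun := Matrix.reindex e e
  invFun := Matrix.reindex e.symm e.symm
  left_inv M := by simp
  right_inv M := by simp
  map_mul' A B := map_mul (Matrix.reindexAlgEquiv ℂ ℂ e) A B
  map_add' A B := by ext i j; simp
  map_smul' r M := by ext i j; simp
  map_star' M := by
    simp [Matrix.star_eq_conjTranspose, Matrix.reindex_apply, Matrix.conjTranspose_submatrix]

end Stmt19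

open Stmt19 in
/-- The conditional expectation onto the diagonal algebra of `M_{2ⁿ}(ℂ)` privatizes
`⌊n/2⌋` qubits: there is a unital *-subalgebra `ℬ` isomorphic to `M_{2^{⌊n/2⌋}}(ℂ)` with
`Φ(b) = (tr b / 2ⁿ)·I` for all `b ∈ ℬ`. -/
theorem stmt19 (n : ℕ) :
    ∃ B : StarSubalgebra ℂ (Matrix (Fin n → Fin 2) (Fin n → Fin 2) ℂ),
      Nonempty (B ≃⋆ₐ[ℂ] Matrix (Fin (2 ^ (n / 2))) (Fin (2 ^ (n / 2))) ℂ) ∧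
      ∀ b ∈ B, diagCondExp b =
        (Matrix.trace b / 2 ^ n) • (1 : Matrix (Fin n → Fin 2) (Fin n → Fin 2) ℂ) := by
  refine ⟨(Psi n).range, ⟨?_⟩, ?_⟩
  · exact (StarAlgEquiv.ofInjective (Psi n) (psiFun_injective n)).symm.trans
      (mreindex (Fintype.equivOfCardEq (by simp [Fintype.card_fun])))
  · rintro b ⟨c, rfl⟩
    show diagCondExp (psiFun n c) = _
    have hdiag : (psiFun n c).diag = fun _ => Matrix.trace c * ((2 : ℂ) ^ (n / 2))⁻¹ :=
      funext (psiFun_diag n c)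
    have htr : Matrix.trace (psiFun n c)
        = (2 : ℂ) ^ n * (Matrix.trace c * ((2 : ℂ) ^ (n / 2))⁻¹) := by
      rw [Matrix.trace, hdiag]
      simp [Finset.sum_const, Fintype.card_fun, mul_comm]
    rw [diagCondExp, hdiag]
    show _ = (Matrix.trace (psiFun n c) / 2 ^ n) • _
    rw [htr, mul_div_cancel_left₀ _ (pow_ne_zero n two_ne_zero : (2:ℂ)^n ≠ 0)]
    ext i j
    by_cases hij : i = j <;>
      simp [Matrix.diagonal_apply, Matrix.one_apply, Matrix.smul_apply, hij]
end
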